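/- arXiv:2504.11646 — 2 statements merged into one kernel-verified Lean document; each statement's English description precedes it below -/
import Mathlib

section
/- Let S be the unit sphere of H, and for x ∈ S let H_x = (ℂx)^⊥ be the orthogonal complement of x, with p_x : H → H_x the orthogonal projection and i_x : H_x → H the inclusion. There exists a family of unitary (isometric linear) isomorphisms h(y,x) : H_x → H_y, defined for all x, y ∈ S, such that: (1) h(x,x) = id_{H_x} for every x ∈ S; (2) h(z,y) ∘ h(y,x) = h(z,x) for all x, y, z ∈ S; (3) the map S × S → B(H) sending (x,y) to the bounded operator i_y ∘ h(y,x) ∘ p_x on H is continuous in the operator norm topology. -/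
/-!
Fix a unit vector `e₀` and a linear isometry `σ` with range orthogonal to `e₀` and without
eigenvectors, e.g. a unilateral shift along a Hilbert basis. For `x` on the sphere, `σ x` is
orthogonal to `e₀` and not parallel to `x`, so the rotation in the plane of `e₀, σ x` followed
by the rotation in the plane of `σ x, x` is a unitary `U x` with `U x e₀ = x`; both `U x` and its
inverse depend norm-continuously on `x`. Restricting `U y ∘ (U x)⁻¹` to `(𝕜 ∙ x)ᗮ` gives a
transitive system, and `i_y ∘ h(y,x) ∘ p_x = U y ∘ p_{e₀} ∘ (U x)⁻¹` is norm continuous.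
-/

open ContinuousLinearMap InnerProductSpace
open scoped InnerProductSpace ComplexConjugate

noncomputable section

variable {𝕜 E : Type*} [RCLike 𝕜] [NormedAddCommGroup E] [InnerProductSpace 𝕜 E]

-- For orthonormal `u, w` this acts on `span {u, w}` by the matrix `!![c, -s; s, conj c]`
-- and as the identity on its orthogonal complement.
def planeRotation (u w : E) (c : 𝕜) (s : ℝ) : E →L[𝕜] E :=
  1 + rankOne 𝕜 ((c - 1) • u + (s : 𝕜) • w) u + rankOne 𝕜 ((conj c - 1) • w - (s : 𝕜) • u) w

lemma planeRotation_apply (u w : E) (c : 𝕜) (s : ℝ) (x : E) :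
    planeRotation u w c s x =
      x + ⟪u, x⟫_𝕜 • ((c - 1) • u + (s : 𝕜) • w) + ⟪w, x⟫_𝕜 • ((conj c - 1) • w - (s : 𝕜) • u) :=
  rfl

@[fun_prop]
lemma Continuous.rankOne {X : Type*} [TopologicalSpace X] {f g : X → E} (hf : Continuous f)
    (hg : Continuous g) : Continuous fun x => InnerProductSpace.rankOne 𝕜 (f x) (g x) :=
  (smulRightL 𝕜 E E).continuous₂.comp (((innerSL 𝕜).continuous.comp hg).prodMk hf)

lemma continuous_planeRotation {X : Type*} [TopologicalSpace X] {u w : X → E} {c : X → 𝕜}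
    {s : X → ℝ} (hu : Continuous u) (hw : Continuous w) (hc : Continuous c)
    (hs : Continuous s) : Continuous fun x => planeRotation (u x) (w x) (c x) (s x) := by
  have hs' : Continuous fun x => (s x : 𝕜) := RCLike.continuous_ofReal.comp hs
  have hc' : Continuous fun x => conj (c x) := RCLike.continuous_conj.comp hc
  unfold planeRotation
  fun_prop

lemma RCLike.mul_conj_add_ofReal_sq {c : 𝕜} {s : ℝ} (hcs : ‖c‖ ^ 2 + s ^ 2 = 1) :
    c * conj c + (s : 𝕜) ^ 2 = 1 := by
  rw [RCLike.mul_conj]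
  exact_mod_cast hcs

section
variable {u w : E} {c : 𝕜} {s : ℝ}

lemma planeRotation_apply_left (hu : ‖u‖ = 1) (huw : ⟪u, w⟫_𝕜 = 0) :
    planeRotation u w c s u = c • u + (s : 𝕜) • w := by
  rw [planeRotation_apply, inner_self_eq_one_of_norm_eq_one hu, inner_eq_zero_symm.mp huw]
  module

variable (hu : ‖u‖ = 1) (hw : ‖w‖ = 1) (huw : ⟪u, w⟫_𝕜 = 0) (hcs : ‖c‖ ^ 2 + s ^ 2 = 1)
include hu hw huw hcs

lemma planeRotation_conj_apply_planeRotation (x : E) :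
    planeRotation u w (conj c) (-s) (planeRotation u w c s x) = x := by
  have hcs' := RCLike.mul_conj_add_ofReal_sq hcs
  simp only [planeRotation_apply, inner_add_right, inner_sub_right, inner_smul_right,
    inner_self_eq_one_of_norm_eq_one hu, inner_self_eq_one_of_norm_eq_one hw, huw,
    inner_eq_zero_symm.mp huw, RCLike.conj_conj, RCLike.ofReal_neg]
  match_scalars
  · ring
  · linear_combination ⟪u, x⟫_𝕜 * hcs'
  · linear_combination ⟪w, x⟫_𝕜 * hcs'

lemma inner_planeRotation_self (x : E) :
    ⟪planeRotation u w c s x, planeRotation u w c s x⟫_𝕜 = ⟪x, x⟫_𝕜 := by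
  have hcs' := RCLike.mul_conj_add_ofReal_sq hcs
  simp only [planeRotation_apply, inner_add_right, inner_sub_right, inner_smul_right,
    inner_add_left, inner_sub_left, inner_smul_left, inner_self_eq_one_of_norm_eq_one hu,
    inner_self_eq_one_of_norm_eq_one hw, huw, inner_eq_zero_symm.mp huw, map_sub, map_one,
    RCLike.conj_conj, RCLike.conj_ofReal]
  rw [← inner_conj_symm x u, ← inner_conj_symm x w]
  linear_combination (⟪u, x⟫_𝕜 * conj ⟪u, x⟫_𝕜 + ⟪w, x⟫_𝕜 * conj ⟪w, x⟫_𝕜) * hcs'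

lemma norm_planeRotation (x : E) : ‖planeRotation u w c s x‖ = ‖x‖ := by
  have h := inner_planeRotation_self hu hw huw hcs x
  rw [inner_self_eq_norm_sq_to_K, inner_self_eq_norm_sq_to_K] at h
  exact (sq_eq_sq₀ (norm_nonneg _) (norm_nonneg _)).mp (by exact_mod_cast h)
end

def planeRotationEquiv {u w : E} {c : 𝕜} {s : ℝ} (hu : ‖u‖ = 1) (hw : ‖w‖ = 1)
    (huw : ⟪u, w⟫_𝕜 = 0) (hcs : ‖c‖ ^ 2 + s ^ 2 = 1) : E ≃ₗᵢ[𝕜] E where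
  toLinearMap := (planeRotation u w c s).toLinearMap
  invFun := planeRotation u w (conj c) (-s)
  left_inv := planeRotation_conj_apply_planeRotation hu hw huw hcs
  right_inv x := by
    have h := planeRotation_conj_apply_planeRotation (c := conj c) (s := -s) hu hw huw
      (by rwa [RCLike.norm_conj, neg_sq]) x
    rwa [RCLike.conj_conj, neg_neg] at h
  norm_map' := norm_planeRotation hu hw huw hcs

section rotationTo
variable {u v : E}

lemma inner_sub_inner_smul_eq_zero (hu : ‖u‖ = 1) : ⟪u, v - ⟪u, v⟫_𝕜 • u⟫_𝕜 = 0 := by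
  rw [inner_sub_right, inner_smul_right, inner_self_eq_one_of_norm_eq_one hu, mul_one, sub_self]

lemma norm_inner_sq_add_norm_sub_inner_smul_sq (hu : ‖u‖ = 1) (hv : ‖v‖ = 1) :
    ‖⟪u, v⟫_𝕜‖ ^ 2 + ‖v - ⟪u, v⟫_𝕜 • u‖ ^ 2 = 1 := by
  have h := norm_add_sq_eq_norm_sq_add_norm_sq_of_inner_eq_zero (𝕜 := 𝕜) (⟪u, v⟫_𝕜 • u)
    (v - ⟪u, v⟫_𝕜 • u) (by rw [inner_smul_left, inner_sub_inner_smul_eq_zero hu, mul_zero])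
  rw [add_sub_cancel, hv, norm_smul, hu, mul_one] at h
  linear_combination -h

def rotationTo (hu : ‖u‖ = 1) (hv : ‖v‖ = 1) (hd : v - ⟪u, v⟫_𝕜 • u ≠ 0) : E ≃ₗᵢ[𝕜] E :=
  planeRotationEquiv (w := (‖v - ⟪u, v⟫_𝕜 • u‖⁻¹ : 𝕜) • (v - ⟪u, v⟫_𝕜 • u)) hu
    (norm_smul_inv_norm hd)
    (by rw [inner_smul_right, inner_sub_inner_smul_eq_zero hu, mul_zero])
    (norm_inner_sq_add_norm_sub_inner_smul_sq hu hv)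

lemma rotationTo_apply_self (hu : ‖u‖ = 1) (hv : ‖v‖ = 1) (hd : v - ⟪u, v⟫_𝕜 • u ≠ 0) :
    rotationTo hu hv hd u = v := by
  have hd' : (‖v - ⟪u, v⟫_𝕜 • u‖ : 𝕜) ≠ 0 := by simpa using hd
  show planeRotation _ _ _ _ u = v
  rw [planeRotation_apply_left hu
    (by rw [inner_smul_right, inner_sub_inner_smul_eq_zero hu, mul_zero]), smul_smul,
    mul_inv_cancel₀ hd', one_smul, add_sub_cancel]

lemma continuous_rotationTo {X : Type*} [TopologicalSpace X] {u v : X → E}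
    (hu : ∀ x, ‖u x‖ = 1) (hv : ∀ x, ‖v x‖ = 1) (hd : ∀ x, v x - ⟪u x, v x⟫_𝕜 • u x ≠ 0)
    (hu' : Continuous u) (hv' : Continuous v) :
    Continuous (fun x => (rotationTo (hu x) (hv x) (hd x)).toLinearIsometry.toContinuousLinearMap) ∧
      Continuous (fun x =>
        (rotationTo (hu x) (hv x) (hd x)).symm.toLinearIsometry.toContinuousLinearMap) := by
  have hc : Continuous fun x => ⟪u x, v x⟫_𝕜 := hu'.inner hv'
  have hdc : Continuous fun x => v x - ⟪u x, v x⟫_𝕜 • u x := hv'.sub (hc.smul hu')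
  have hs : Continuous fun x => ‖v x - ⟪u x, v x⟫_𝕜 • u x‖ := hdc.norm
  have hw : Continuous fun x => (‖v x - ⟪u x, v x⟫_𝕜 • u x‖⁻¹ : 𝕜) • (v x - ⟪u x, v x⟫_𝕜 • u x) :=
    ((RCLike.continuous_ofReal.comp hs).inv₀ fun x => by simpa using hd x).smul hdc
  exact ⟨continuous_planeRotation hu' hw hc hs,
    continuous_planeRotation hu' hw (RCLike.continuous_conj.comp hc) hs.neg⟩

end rotationTo

namespace HilbertBasis
variable {ι : Type*}

lemma countable_index [TopologicalSpace.SeparableSpace E] (b : HilbertBasis ι 𝕜 E) :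
    Countable ι := by
  refine Pairwise.countable_of_isOpen_disjoint (s := fun i => Metric.ball (b i) 2⁻¹)
    (fun i j hij => Metric.ball_disjoint_ball ?_) (fun _ => Metric.isOpen_ball)
    (fun _ => Metric.nonempty_ball.mpr (by norm_num))
  have h : ‖b i - b j‖ ^ 2 = 2 := by
    rw [@norm_sub_sq 𝕜, b.orthonormal.inner_eq_zero hij, b.orthonormal.norm_eq_one,
      b.orthonormal.norm_eq_one]
    norm_num
  rw [dist_eq_norm]
  nlinarith [norm_nonneg (b i - b j)]

lemma infinite_index (b : HilbertBasis ι 𝕜 E) (h : ¬FiniteDimensional 𝕜 E) : Infinite ι := by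
  by_contra hfin
  have : Fintype ι := @Fintype.ofFinite _ (not_infinite_iff_finite.mp hfin)
  exact h (Module.Finite.of_basis b.toOrthonormalBasis.toBasis)

variable [CompleteSpace E] (b : HilbertBasis ι 𝕜 E) {J : ι → ι} (hJ : Function.Injective J)

def shift : E →ₗᵢ[𝕜] E :=
  (b.orthonormal.comp J hJ).orthogonalFamily.linearIsometry.comp b.repr.toLinearIsometry

lemma shift_apply_self (i : ι) : b.shift hJ (b i) = b (J i) := by
  classical
  simp [shift, b.repr_self, OrthogonalFamily.linearIsometry_apply_single]

lemma inner_comp_shift_apply (i : ι) (x : E) : ⟪b (J i), b.shift hJ x⟫_𝕜 = ⟪b i, x⟫_𝕜 := by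
  rw [← shift_apply_self b hJ, LinearIsometry.inner_map_map]

lemma inner_shift_apply_eq_zero {k : ι} (hk : k ∉ Set.range J) (x : E) :
    ⟪b k, b.shift hJ x⟫_𝕜 = 0 := by
  have h : (innerSL 𝕜 (b k)).comp (b.shift hJ).toContinuousLinearMap = 0 := by
    refine ContinuousLinearMap.ext_on
      (Submodule.dense_iff_topologicalClosure_eq_top.mpr b.dense_span) ?_
    rintro _ ⟨i, rfl⟩
    simp only [ContinuousLinearMap.comp_apply, LinearIsometry.coe_toContinuousLinearMap,
      shift_apply_self, innerSL_apply_apply]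
    exact b.orthonormal.inner_eq_zero fun h => hk ⟨i, h.symm⟩
  simpa using congr($h x)

lemma eq_zero_of_shift_apply_eq_smul {i₀ : ι} (h₀ : i₀ ∉ Set.range J)
    (hJ₀ : ∀ i, ∃ n, J^[n] i₀ = i) {x : E} {c : 𝕜} (hx : b.shift hJ x = c • x) : x = 0 := by
  rcases eq_or_ne c 0 with rfl | hc
  · rw [zero_smul] at hx
    simpa using congr(‖$hx‖)
  have horbit : ∀ n, ⟪b (J^[n] i₀), x⟫_𝕜 = 0 := by
    intro n
    induction n with
    | zero =>
      have h := b.inner_shift_apply_eq_zero hJ h₀ x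
      rw [hx, inner_smul_right] at h
      exact (mul_eq_zero.mp h).resolve_left hc
    | succ n ih =>
      have h := b.inner_comp_shift_apply hJ (J^[n] i₀) x
      rw [hx, inner_smul_right, ih, ← Function.iterate_succ_apply' J] at h
      exact (mul_eq_zero.mp h).resolve_left hc
  refine b.repr.injective (lp.ext (funext fun i => ?_))
  obtain ⟨n, rfl⟩ := hJ₀ i
  simpa [b.repr_apply_apply] using horbit n

end HilbertBasis

theorem exists_linearIsometry_orthogonal_without_eigenvector [CompleteSpace E]
    [TopologicalSpace.SeparableSpace E] (h : ¬FiniteDimensional 𝕜 E) :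
    ∃ (e₀ : E) (σ : E →ₗᵢ[𝕜] E), ‖e₀‖ = 1 ∧ (∀ x, ⟪e₀, σ x⟫_𝕜 = 0) ∧
      ∀ (x : E) (c : 𝕜), σ x = c • x → x = 0 := by
  obtain ⟨w, b, -⟩ := exists_hilbertBasis 𝕜 E
  have := b.countable_index
  have := b.infinite_index h
  obtain ⟨e⟩ : Nonempty (w ≃ ℕ) := ⟨(nonempty_denumerable_iff.mpr ⟨‹_›, ‹_›⟩).some.eqv⟩
  let J : w → w := fun i => e.symm (e i + 1)
  have hJ : Function.Injective J := fun i j hij => by simpa [J] using congr(e $hij)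
  have hJ₀ : ∀ n, J^[n] (e.symm 0) = e.symm n := by
    intro n
    induction n with
    | zero => rfl
    | succ n ih => rw [Function.iterate_succ_apply', ih]; simp [J]
  have h₀ : e.symm 0 ∉ Set.range J := by
    rintro ⟨i, hi⟩
    simpa [J] using congr(e $hi)
  refine ⟨b (e.symm 0), b.shift hJ, b.orthonormal.norm_eq_one _,
    b.inner_shift_apply_eq_zero hJ h₀, fun x c hx => b.eq_zero_of_shift_apply_eq_smul hJ h₀ ?_ hx⟩
  exact fun i => ⟨e i, by simp [hJ₀]⟩

namespace LinearIsometryEquiv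
variable (U : E ≃ₗᵢ[𝕜] E) {a b : E} (h : U a = b)
include h

lemma map_orthogonal_span_singleton :
    (𝕜 ∙ a)ᗮ.map (U.toLinearEquiv : E →ₗ[𝕜] E) = (𝕜 ∙ b)ᗮ := by
  rw [Submodule.map_orthogonal_equiv, Submodule.map_span, Set.image_singleton]
  exact congr((𝕜 ∙ $h)ᗮ)

def orthogonalSpanSingleton : (𝕜 ∙ a)ᗮ ≃ₗᵢ[𝕜] (𝕜 ∙ b)ᗮ :=
  (U.submoduleMap _).trans (.ofEq _ _ (U.map_orthogonal_span_singleton h))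

@[simp]
lemma coe_orthogonalSpanSingleton_apply (v : (𝕜 ∙ a)ᗮ) :
    (U.orthogonalSpanSingleton h v : E) = U v := rfl

@[simp]
lemma coe_orthogonalSpanSingleton_symm_apply (v : (𝕜 ∙ b)ᗮ) :
    ((U.orthogonalSpanSingleton h).symm v : E) = U.symm v := rfl

lemma symm_starProjection_orthogonal_span_singleton [CompleteSpace E] (v : E) :
    U.symm ((𝕜 ∙ b)ᗮ.starProjection v) = (𝕜 ∙ a)ᗮ.starProjection (U.symm v) := by
  have hmap := Submodule.starProjection_map_apply U (𝕜 ∙ a)ᗮ v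
  simp only [U.map_orthogonal_span_singleton h] at hmap
  rw [hmap, symm_apply_apply]

end LinearIsometryEquiv

theorem exists_orthogonal_transport_of_continuous_frame [CompleteSpace E] {e₀ : E}
    (U : Metric.sphere (0 : E) 1 → E ≃ₗᵢ[𝕜] E) (hU : ∀ x, U x e₀ = x)
    (hUc : Continuous fun x => (U x).toLinearIsometry.toContinuousLinearMap)
    (hUc' : Continuous fun x => (U x).symm.toLinearIsometry.toContinuousLinearMap) :
    ∃ h : ∀ x y : Metric.sphere (0 : E) 1,
        ((Submodule.span 𝕜 {(x : E)})ᗮ ≃ₗᵢ[𝕜] (Submodule.span 𝕜 {(y : E)})ᗮ),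
      (∀ x, h x x = LinearIsometryEquiv.refl 𝕜 _) ∧
      (∀ x y z, (h x y).trans (h y z) = h x z) ∧
      Continuous (fun p : Metric.sphere (0 : E) 1 × Metric.sphere (0 : E) 1 =>
        ((Submodule.span 𝕜 {(p.2 : E)})ᗮ).subtypeL ∘L
          (h p.1 p.2).toLinearIsometry.toContinuousLinearMap ∘L
          Submodule.orthogonalProjectionOnto (Submodule.span 𝕜 {(p.1 : E)})ᗮ) := by
  let W x := (U x).orthogonalSpanSingleton (hU x)
  refine ⟨fun x y => (W x).symm.trans (W y), fun x => (W x).symm_trans_self, fun x y z => ?_, ?_⟩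
  · ext v
    simp
  · have hfun : (fun p : Metric.sphere (0 : E) 1 × Metric.sphere (0 : E) 1 =>
        ((Submodule.span 𝕜 {(p.2 : E)})ᗮ).subtypeL ∘L
          ((W p.1).symm.trans (W p.2)).toLinearIsometry.toContinuousLinearMap ∘L
          Submodule.orthogonalProjectionOnto (Submodule.span 𝕜 {(p.1 : E)})ᗮ) =
        fun p => (U p.2).toLinearIsometry.toContinuousLinearMap ∘L (𝕜 ∙ e₀)ᗮ.starProjection ∘L
          (U p.1).symm.toLinearIsometry.toContinuousLinearMap := by
      ext p v
      simp [W, ← (U p.1).symm_starProjection_orthogonal_span_singleton (hU p.1)]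
    rw [hfun]
    exact (hUc.comp continuous_snd).clm_comp (continuous_const.clm_comp (hUc'.comp continuous_fst))

theorem exists_continuous_frame {e₀ : E} (he₀ : ‖e₀‖ = 1) (σ : E →ₗᵢ[𝕜] E)
    (hσ₀ : ∀ x, ⟪e₀, σ x⟫_𝕜 = 0) (hσ : ∀ (x : E) (c : 𝕜), σ x = c • x → x = 0) :
    ∃ U : Metric.sphere (0 : E) 1 → E ≃ₗᵢ[𝕜] E, (∀ x, U x e₀ = x) ∧
      (Continuous fun x => (U x).toLinearIsometry.toContinuousLinearMap) ∧
      Continuous fun x => (U x).symm.toLinearIsometry.toContinuousLinearMap := by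
  have hx : ∀ x : Metric.sphere (0 : E) 1, ‖(x : E)‖ = 1 := fun x => norm_eq_of_mem_sphere x
  have hσx : ∀ x : Metric.sphere (0 : E) 1, ‖σ x‖ = 1 := fun x => (σ.norm_map x).trans (hx x)
  have hd₁ : ∀ x : Metric.sphere (0 : E) 1, σ x - ⟪e₀, σ x⟫_𝕜 • e₀ ≠ 0 := fun x => by
    rw [hσ₀, zero_smul, sub_zero, ← norm_ne_zero_iff, hσx]
    exact one_ne_zero
  -- `x` and `σ x` are never parallel, since `σ` has no eigenvectors
  have hd₂ : ∀ x : Metric.sphere (0 : E) 1, (x : E) - ⟪σ x, x⟫_𝕜 • σ x ≠ 0 := fun x hpar => by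
    obtain ⟨c, hc⟩ : ∃ c : 𝕜, (x : E) = c • σ x := ⟨_, sub_eq_zero.mp hpar⟩
    have hc₀ : c ≠ 0 := by
      rintro rfl
      have h := hx x
      rw [hc, zero_smul, norm_zero] at h
      exact zero_ne_one h
    have := hσ x c⁻¹ (by rw [eq_inv_smul_iff₀ hc₀]; exact hc.symm)
    simpa [this] using hx x
  let R₁ x := rotationTo he₀ (hσx x) (hd₁ x)
  let R₂ x := rotationTo (hσx x) (hx x) (hd₂ x)
  obtain ⟨hR₁, hR₁'⟩ := continuous_rotationTo (fun _ => he₀) hσx hd₁ continuous_const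
    (σ.continuous.comp continuous_subtype_val)
  obtain ⟨hR₂, hR₂'⟩ := continuous_rotationTo hσx hx hd₂
    (σ.continuous.comp continuous_subtype_val) continuous_subtype_val
  refine ⟨fun x => (R₁ x).trans (R₂ x), fun x => ?_, hR₂.clm_comp hR₁, hR₁'.clm_comp hR₂'⟩
  simp only [LinearIsometryEquiv.trans_apply, R₁, R₂, rotationTo_apply_self]

end

-- `h x y : H_x ≃ H_y` is the paper's `h(y,x)`.
/-- There exists a transitive system of unitary isomorphisms `h(y,x) : H_x → H_y` between
the orthogonal complements of the points of the unit sphere, such that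
`(x, y) ↦ i_y ∘ h(y,x) ∘ p_x` is norm continuous.  (Here `h x y : H_x ≃ H_y` denotes
`h(y,x)`.) -/
theorem stmt6 {H : Type*} [NormedAddCommGroup H] [InnerProductSpace ℂ H]
    [CompleteSpace H] [TopologicalSpace.SeparableSpace H]
    (hinf : ¬FiniteDimensional ℂ H) :
    ∃ h : ∀ x y : Metric.sphere (0 : H) 1,
        ((Submodule.span ℂ {(x : H)})ᗮ ≃ₗᵢ[ℂ] (Submodule.span ℂ {(y : H)})ᗮ),
      (∀ x, h x x = LinearIsometryEquiv.refl ℂ _) ∧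
      (∀ x y z, (h x y).trans (h y z) = h x z) ∧
      Continuous (fun p : Metric.sphere (0 : H) 1 × Metric.sphere (0 : H) 1 =>
        ((Submodule.span ℂ {(p.2 : H)})ᗮ).subtypeL ∘L
          (h p.1 p.2).toLinearIsometry.toContinuousLinearMap ∘L
          Submodule.orthogonalProjectionOnto (Submodule.span ℂ {(p.1 : H)})ᗮ) := by
  obtain ⟨e₀, σ, he₀, hσ₀, hσ⟩ := exists_linearIsometry_orthogonal_without_eigenvector hinf
  obtain ⟨U, hU, hUc, hUc'⟩ := exists_continuous_frame he₀ σ hσ₀ hσ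
  exact exists_orthogonal_transport_of_continuous_frame U hU hUc hUc'
end

section
/- Let (u_t)_{t ∈ (0,1]} be a family of bounded operators on H with u_t* u_t = id_H, with u₁ = id_H, t ↦ u_t operator-norm continuous on (0,1), and u_t → id_H strongly as t → 1. Let (v_t)_{t ∈ [0,1)} be a family of bounded operators on H with v_t* v_t = id_H, with v₀ = id_H, t ↦ v_t operator-norm continuous on (0,1), and v_t → id_H strongly as t → 0. Let K(H) be the compact operators on H with the operator norm. Then the map K(H) × [0,1] × K(H) → K(H) defined by (A,t,B) ↦ t·(u_t A u_t*) + (1−t)·(v_t B v_t*) for t ∈ (0,1), (A,0,B) ↦ B, and (A,1,B) ↦ A, is jointly continuous in the operator norm; it is a canonical homotopy between any two compact operators A and B depending continuously on A and B. -/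
/-!
At an interior time the formula is norm-continuous because `u`, `v` and the adjoint are. At `t = 1`
the difficulty is that `u t → 1` only strongly. A uniformly bounded, strongly convergent family
converges uniformly on compact sets, hence in norm after composition with a compact operator, so
`u t ∘L A → A`. Since `A†` is compact as well (Schauder; in Hilbert space it follows from
`‖A† y‖² ≤ ‖y‖ ‖A A† y‖`), also `A ∘L (u t)† = (u t ∘L A†)† → A`, and together
`u t ∘L A ∘L (u t)† → A`, while the `v`-summand is killed by the factor `1 - t`. The endpoint
`t = 0` is symmetric.
-/

open Filter Topology ContinuousLinearMap Metric Set

section Normed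

variable {𝕜 D E F ι : Type*} {l : Filter ι}

theorem TotallyBounded.tendstoUniformlyOn_of_tendsto_apply [NontriviallyNormedField 𝕜]
    [SeminormedAddCommGroup E] [NormedSpace 𝕜 E] [SeminormedAddCommGroup F] [NormedSpace 𝕜 F]
    {K : Set E} (hK : TotallyBounded K) {T : ι → E →L[𝕜] F} {T₀ : E →L[𝕜] F} {C : ℝ}
    (hC : ∀ᶠ i in l, ‖T i‖ ≤ C) (hT : ∀ x, Tendsto (fun i => T i x) l (𝓝 (T₀ x))) :
    TendstoUniformlyOn (fun i => ⇑(T i)) T₀ l K := by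
  rw [Metric.tendstoUniformlyOn_iff]
  intro ε hε
  set M := |C| + ‖T₀‖ + 1
  have hM : 0 < M := by positivity
  set δ := ε / (2 * M)
  obtain ⟨t, ht, hKt⟩ := Metric.totallyBounded_iff.1 hK δ (by positivity)
  have hnet : ∀ᶠ i in l, ∀ z ∈ t, dist (T i z) (T₀ z) < ε / 2 :=
    ht.eventually_all.2 fun z _ => Metric.tendsto_nhds.1 (hT z) _ (half_pos hε)
  filter_upwards [hC, hnet] with i hCi hneti y hy
  obtain ⟨z, hzt, hyz⟩ := mem_iUnion₂.1 (hKt hy)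
  have hδ : (‖T₀‖ + C) * δ < ε / 2 := by
    have : (‖T₀‖ + C) * δ < M * δ := by gcongr; linarith [le_abs_self C]
    rwa [show M * δ = ε / 2 by simp only [δ]; field_simp] at this
  calc dist (T₀ y) (T i y)
      ≤ dist (T₀ y) (T₀ z) + dist (T₀ z) (T i z) + dist (T i z) (T i y) := dist_triangle4 _ _ _ _
    _ ≤ ‖T₀‖ * δ + ε / 2 + C * δ := by
        gcongr
        · exact (T₀.dist_le_opNorm y z).trans (by gcongr; exact hyz.le)
        · rw [dist_comm]; exact (hneti z hzt).le
        · rw [dist_comm]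
          exact (T i |>.dist_le_opNorm y z).trans
            (mul_le_mul hCi hyz.le dist_nonneg ((norm_nonneg _).trans hCi))
    _ < ε := by linarith

theorem IsCompactOperator.tendsto_comp_of_tendsto_apply [RCLike 𝕜]
    [NormedAddCommGroup D] [NormedSpace 𝕜 D] [NormedAddCommGroup E] [NormedSpace 𝕜 E]
    [NormedAddCommGroup F] [NormedSpace 𝕜 F] {A : D →L[𝕜] E} (hA : IsCompactOperator A)
    {T : ι → E →L[𝕜] F} {T₀ : E →L[𝕜] F} {C : ℝ}
    (hC : ∀ᶠ i in l, ‖T i‖ ≤ C) (hT : ∀ x, Tendsto (fun i => T i x) l (𝓝 (T₀ x))) :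
    Tendsto (fun i => T i ∘L A) l (𝓝 (T₀ ∘L A)) := by
  have hK : TotallyBounded (A '' closedBall 0 1) :=
    (hA.isCompact_closure_image_closedBall 1).totallyBounded.subset subset_closure
  have hU := Metric.tendstoUniformlyOn_iff.1 (hK.tendstoUniformlyOn_of_tendsto_apply hC hT)
  refine Metric.tendsto_nhds.2 fun ε hε => ?_
  filter_upwards [hU (ε / 2) (half_pos hε)] with i hi
  rw [dist_eq_norm]
  refine lt_of_le_of_lt (opNorm_le_of_unit_norm (half_pos hε).le fun x hx => ?_) (half_lt_self hε)
  rw [sub_apply, comp_apply, comp_apply, ← dist_eq_norm, dist_comm]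
  exact (hi (A x) (mem_image_of_mem _ (by simp [hx]))).le

end Normed

theorem totallyBounded_image_of_forall_dist_lt {α β γ : Type*} [PseudoMetricSpace β]
    [PseudoMetricSpace γ] {s : Set α} {f : α → β} {g : α → γ} (hf : TotallyBounded (f '' s))
    (hfg : ∀ ε > 0, ∃ δ > 0, ∀ x ∈ s, ∀ y ∈ s, dist (f x) (f y) < δ → dist (g x) (g y) < ε) :
    TotallyBounded (g '' s) := by
  refine Metric.totallyBounded_iff.2 fun ε hε => ?_
  obtain ⟨δ, hδ, hδε⟩ := hfg ε hε
  obtain ⟨t, hts, ht, hcover⟩ :=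
    exists_subset_image_finite_and.1 (finite_approx_of_totallyBounded hf δ hδ)
  refine ⟨g '' t, ht.image g, ?_⟩
  rintro _ ⟨x, hx, rfl⟩
  obtain ⟨_, ⟨y, hyt, rfl⟩, hxy⟩ := mem_iUnion₂.1 (hcover (mem_image_of_mem f hx))
  exact mem_iUnion₂.2 ⟨g y, mem_image_of_mem g hyt, hδε x hx y (hts hyt) hxy⟩

theorem continuousWithinAt_Icc_of_endpoint {α β γ : Type*} [TopologicalSpace α]
    [TopologicalSpace β] [TopologicalSpace γ] {f : α × ℝ × β → γ} {a : α} {b : β} {c : ℝ}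
    (hc : c = 0 ∨ c = 1) (h_end : ContinuousWithinAt f {p | p.2.1 = c} (a, c, b))
    (h_Ioo : ContinuousWithinAt f {p | p.2.1 ∈ Ioo 0 1} (a, c, b)) :
    ContinuousWithinAt f {p | p.2.1 ∈ Icc 0 1} (a, c, b) := by
  have hnear : {p : α × ℝ × β | p.2.1 ∈ Ioo (c - 1) (c + 1)} ∈ 𝓝 (a, c, b) :=
    (isOpen_Ioo.preimage (by fun_prop)).mem_nhds (by simp)
  refine (h_end.union h_Ioo).mono_of_mem_nhdsWithin ?_
  filter_upwards [self_mem_nhdsWithin, mem_nhdsWithin_of_mem_nhds hnear]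
    with p ⟨h0, h1⟩ ⟨hc0, hc1⟩
  rcases hc with rfl | rfl
  · rcases h0.eq_or_lt with h | h
    exacts [Or.inl h.symm, Or.inr ⟨h, by linarith⟩]
  · rcases h1.eq_or_lt with h | h
    exacts [Or.inl h, Or.inr ⟨by linarith, h⟩]

section Hilbert

open scoped InnerProduct

variable {𝕜 E F ι : Type*} [RCLike 𝕜] [NormedAddCommGroup E] [InnerProductSpace 𝕜 E]
  [CompleteSpace E] [NormedAddCommGroup F] [InnerProductSpace 𝕜 F] [CompleteSpace F]
  {l : Filter ι}

theorem norm_adjoint_apply_sq_le (A : E →L[𝕜] F) (y : F) :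
    ‖adjoint A y‖ ^ 2 ≤ ‖y‖ * ‖A (adjoint A y)‖ := by
  rw [apply_norm_sq_eq_inner_adjoint_right, adjoint_adjoint]
  exact (RCLike.re_le_norm _).trans (norm_inner_le_norm _ _)

theorem IsCompactOperator.adjoint {A : E →L[𝕜] F} (hA : IsCompactOperator A) :
    IsCompactOperator (A†) := by
  set A' := A†
  have hAA' : TotallyBounded ((A ∘L A') '' closedBall 0 1) :=
    ((hA.comp_clm A').isCompact_closure_image_closedBall 1).totallyBounded.subset subset_closure
  refine (isCompactOperator_iff_isCompact_closure_image_closedBall (A' : F →ₗ[𝕜] E) one_pos).2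
    ((totallyBounded_image_of_forall_dist_lt hAA' fun ε hε => ⟨ε ^ 2 / 2, by positivity,
      fun x hx y hy hxy => ?_⟩).closure.isCompact_of_isClosed isClosed_closure)
  have hxy2 : ‖x - y‖ ≤ 2 := by
    simp only [mem_closedBall_zero_iff] at hx hy
    linarith [norm_sub_le x y]
  rw [dist_eq_norm, ← map_sub] at hxy ⊢
  refine lt_of_pow_lt_pow_left₀ 2 hε.le ((norm_adjoint_apply_sq_le A (x - y)).trans_lt ?_)
  calc ‖x - y‖ * ‖A (A' (x - y))‖ ≤ 2 * ‖A (A' (x - y))‖ := by gcongr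
    _ < ε ^ 2 := by simp only [comp_apply] at hxy; linarith

theorem norm_comp_comp_adjoint_le (T : E →L[𝕜] F) (X : E →L[𝕜] E) :
    ‖T ∘L X ∘L T†‖ ≤ ‖T‖ * ‖X‖ * ‖T‖ := by
  calc ‖T ∘L X ∘L T†‖ ≤ ‖T‖ * (‖X‖ * ‖T†‖) :=
        (opNorm_comp_le _ _).trans (by gcongr; exact opNorm_comp_le _ _)
    _ = ‖T‖ * ‖X‖ * ‖T‖ := by rw [adjoint.norm_map, mul_assoc]

theorem norm_comp_comp_adjoint_le_of_norm_le_one {T : E →L[𝕜] F} (hT : ‖T‖ ≤ 1)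
    (X : E →L[𝕜] E) : ‖T ∘L X ∘L T†‖ ≤ ‖X‖ :=
  calc ‖T ∘L X ∘L T†‖ ≤ ‖T‖ * ‖X‖ * ‖T‖ := norm_comp_comp_adjoint_le T X
    _ ≤ 1 * ‖X‖ * 1 := by gcongr
    _ = ‖X‖ := by ring

theorem norm_le_one_of_adjoint_comp_self_eq_one {T : E →L[𝕜] F} (hT : T† ∘L T = 1) :
    ‖T‖ ≤ 1 := by
  have h := norm_adjoint_comp_self T
  rw [hT] at h
  have h1 : ‖(1 : E →L[𝕜] E)‖ ≤ 1 := norm_id_le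
  nlinarith [norm_nonneg T]

theorem IsCompactOperator.tendsto_comp_comp_adjoint {A : E →L[𝕜] E} (hA : IsCompactOperator A)
    {T : ι → E →L[𝕜] F} {T₀ : E →L[𝕜] F} {C : ℝ}
    (hC : ∀ᶠ i in l, ‖T i‖ ≤ C) (hT : ∀ x, Tendsto (fun i => T i x) l (𝓝 (T₀ x))) :
    Tendsto (fun i => T i ∘L A ∘L (T i)†) l (𝓝 (T₀ ∘L A ∘L T₀†)) := by
  have hTA : Tendsto (fun i => T i ∘L A - T₀ ∘L A) l (𝓝 0) :=
    tendsto_sub_nhds_zero_iff.2 (hA.tendsto_comp_of_tendsto_apply hC hT)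
  have hAT : Tendsto (fun i => A ∘L (T i)†) l (𝓝 (A ∘L T₀†)) := by
    have := hA.adjoint.tendsto_comp_of_tendsto_apply hC hT
    simpa [Function.comp_def, adjoint_comp] using
      (ContinuousLinearMap.adjoint.continuous.tendsto _).comp this
  have hsmall : Tendsto (fun i => (T i ∘L A - T₀ ∘L A) ∘L (T i)†) l (𝓝 0) := by
    refine squeeze_zero_norm' ?_ (by simpa using hTA.norm.mul_const C)
    filter_upwards [hC] with i hi
    exact (opNorm_comp_le _ _).trans (by rw [ContinuousLinearMap.adjoint.norm_map]; gcongr)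
  have hsum := hsmall.add (((compL 𝕜 F E F T₀).continuous.tendsto _).comp hAT)
  simpa [Function.comp_def, sub_comp, comp_assoc] using hsum

end Hilbert

section Homotopy

variable {H ι : Type*} [NormedAddCommGroup H] [InnerProductSpace ℂ H] [CompleteSpace H]
  {l : Filter ι}

theorem tendsto_smul_comp_comp_adjoint_add_smul {u : ι → H →L[ℂ] H} {C : ℝ}
    (hC : ∀ᶠ i in l, ‖u i‖ ≤ C) (hu : ∀ x, Tendsto (fun i => u i x) l (𝓝 x))
    {A : H →L[ℂ] H} (hA : IsCompactOperator A) {A' : ι → H →L[ℂ] H} (hA' : Tendsto A' l (𝓝 A))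
    {s : ι → ℝ} (hs : Tendsto s l (𝓝 1)) {R : ι → H →L[ℂ] H}
    (hR : IsBoundedUnder (· ≤ ·) l fun i => ‖R i‖) :
    Tendsto (fun i => s i • (u i ∘L A' i ∘L adjoint (u i)) + (1 - s i) • R i) l (𝓝 A) := by
  have hconj : Tendsto (fun i => u i ∘L A ∘L adjoint (u i)) l (𝓝 A) := by
    simpa [adjoint_id, one_def] using hA.tendsto_comp_comp_adjoint (T₀ := 1) hC hu
  have hdiff : Tendsto (fun i => u i ∘L (A' i - A) ∘L adjoint (u i)) l (𝓝 0) := by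
    have hA'A := (tendsto_sub_nhds_zero_iff.2 hA').norm
    refine squeeze_zero_norm' ?_ (by simpa using (hA'A.const_mul C).mul_const C)
    filter_upwards [hC] with i hi
    have hC0 : 0 ≤ C := (norm_nonneg _).trans hi
    exact (norm_comp_comp_adjoint_le _ _).trans (by gcongr)
  have hA'conj : Tendsto (fun i => u i ∘L A' i ∘L adjoint (u i)) l (𝓝 A) := by
    simpa [comp_sub, sub_comp] using hdiff.add hconj
  have hs' : Tendsto (fun i => 1 - s i) l (𝓝 0) := by
    simpa using (tendsto_const_nhds (x := (1 : ℝ))).sub hs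
  have hR' : Tendsto (fun i => (1 - s i) • R i) l (𝓝 0) := hs'.zero_smul_isBoundedUnder_le hR
  simpa using (hs.smul hA'conj).add hR'

variable {u v : ℝ → H →L[ℂ] H} {G : (H →L[ℂ] H) → ℝ → (H →L[ℂ] H) → (H →L[ℂ] H)}

theorem continuousWithinAt_homotopy_one (hu : ∀ t ∈ Ioo (0 : ℝ) 1, ‖u t‖ ≤ 1)
    (hu_strong : ∀ h : H, Tendsto (fun t => u t h) (𝓝[Ioo 0 1] 1) (𝓝 h))
    (hv : ∀ t ∈ Ioo (0 : ℝ) 1, ‖v t‖ ≤ 1)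
    (hG : ∀ A B, ∀ t ∈ Ioo (0 : ℝ) 1,
      G A t B = t • (u t ∘L A ∘L adjoint (u t)) + (1 - t) • (v t ∘L B ∘L adjoint (v t)))
    (hG1 : ∀ A B, G A 1 B = A) {A : H →L[ℂ] H} (hA : IsCompactOperator A) (B : H →L[ℂ] H) :
    ContinuousWithinAt (fun p : (H →L[ℂ] H) × ℝ × (H →L[ℂ] H) => G p.1 p.2.1 p.2.2)
      {p | p.2.1 ∈ Icc 0 1} (A, 1, B) := by
  refine continuousWithinAt_Icc_of_endpoint (Or.inr rfl)
    (continuous_fst.continuousWithinAt.congr (fun p (hp : p.2.1 = 1) => by simp [hp, hG1])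
      (hG1 A B)) ?_
  set P : Set ((H →L[ℂ] H) × ℝ × (H →L[ℂ] H)) := {p | p.2.1 ∈ Ioo 0 1}
  have ht : Tendsto (fun p => p.2.1) (𝓝[P] (A, 1, B)) (𝓝[Ioo 0 1] 1) :=
    (continuous_fst.comp continuous_snd).continuousWithinAt.tendsto_nhdsWithin fun _ hp => hp
  have hu' : ∀ x, Tendsto (fun p => u p.2.1 x) (𝓝[P] (A, 1, B)) (𝓝 x) :=
    fun x => (hu_strong x).comp ht
  have hbdd : ∀ᶠ p in 𝓝[P] (A, 1, B), ‖u p.2.1‖ ≤ 1 :=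
    eventually_nhdsWithin_of_forall fun p hp => hu _ hp
  have hB : Tendsto (fun p => p.2.2) (𝓝[P] (A, 1, B)) (𝓝 B) :=
    (continuous_snd.comp continuous_snd).continuousWithinAt
  have hR : IsBoundedUnder (· ≤ ·) (𝓝[P] (A, 1, B))
      fun p => ‖v p.2.1 ∘L p.2.2 ∘L adjoint (v p.2.1)‖ :=
    hB.norm.isBoundedUnder_le.mono_le <| eventually_nhdsWithin_of_forall fun p hp =>
      norm_comp_comp_adjoint_le_of_norm_le_one (hv _ hp) _
  have h := tendsto_smul_comp_comp_adjoint_add_smul hbdd hu' hA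
    continuous_fst.continuousWithinAt (tendsto_nhdsWithin_iff.1 ht).1 hR
  rw [ContinuousWithinAt, hG1]
  exact h.congr' (eventually_nhdsWithin_of_forall fun p hp => (hG _ _ _ hp).symm)

theorem continuousWithinAt_homotopy_zero (hu : ∀ t ∈ Ioo (0 : ℝ) 1, ‖u t‖ ≤ 1)
    (hv : ∀ t ∈ Ioo (0 : ℝ) 1, ‖v t‖ ≤ 1)
    (hv_strong : ∀ h : H, Tendsto (fun t => v t h) (𝓝[Ioo 0 1] 0) (𝓝 h))
    (hG : ∀ A B, ∀ t ∈ Ioo (0 : ℝ) 1,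
      G A t B = t • (u t ∘L A ∘L adjoint (u t)) + (1 - t) • (v t ∘L B ∘L adjoint (v t)))
    (hG0 : ∀ A B, G A 0 B = B) (A : H →L[ℂ] H) {B : H →L[ℂ] H} (hB : IsCompactOperator B) :
    ContinuousWithinAt (fun p : (H →L[ℂ] H) × ℝ × (H →L[ℂ] H) => G p.1 p.2.1 p.2.2)
      {p | p.2.1 ∈ Icc 0 1} (A, 0, B) := by
  refine continuousWithinAt_Icc_of_endpoint (Or.inl rfl)
    ((continuous_snd.comp continuous_snd).continuousWithinAt.congr
      (fun p (hp : p.2.1 = 0) => by simp [hp, hG0]) (hG0 A B)) ?_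
  set P : Set ((H →L[ℂ] H) × ℝ × (H →L[ℂ] H)) := {p | p.2.1 ∈ Ioo 0 1}
  have ht : Tendsto (fun p => p.2.1) (𝓝[P] (A, 0, B)) (𝓝[Ioo 0 1] 0) :=
    (continuous_fst.comp continuous_snd).continuousWithinAt.tendsto_nhdsWithin fun _ hp => hp
  have hv' : ∀ x, Tendsto (fun p => v p.2.1 x) (𝓝[P] (A, 0, B)) (𝓝 x) :=
    fun x => (hv_strong x).comp ht
  have hbdd : ∀ᶠ p in 𝓝[P] (A, 0, B), ‖v p.2.1‖ ≤ 1 :=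
    eventually_nhdsWithin_of_forall fun p hp => hv _ hp
  have hA : Tendsto (fun p => p.1) (𝓝[P] (A, 0, B)) (𝓝 A) := continuous_fst.continuousWithinAt
  have hR : IsBoundedUnder (· ≤ ·) (𝓝[P] (A, 0, B))
      fun p => ‖u p.2.1 ∘L p.1 ∘L adjoint (u p.2.1)‖ :=
    hA.norm.isBoundedUnder_le.mono_le <| eventually_nhdsWithin_of_forall fun p hp =>
      norm_comp_comp_adjoint_le_of_norm_le_one (hu _ hp) _
  have hs : Tendsto (fun p => 1 - p.2.1) (𝓝[P] (A, 0, B)) (𝓝 1) := by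
    simpa using tendsto_const_nhds.sub (tendsto_nhdsWithin_iff.1 ht).1
  have h := tendsto_smul_comp_comp_adjoint_add_smul hbdd hv' hB
    (continuous_snd.comp continuous_snd).continuousWithinAt hs hR
  rw [ContinuousWithinAt, hG0]
  refine h.congr' (eventually_nhdsWithin_of_forall fun p hp => ?_)
  dsimp only [Function.comp_apply]
  rw [hG _ _ _ hp, sub_sub_cancel, add_comm]

theorem continuousAt_homotopy_of_mem_Ioo (hu_cont : ContinuousOn u (Ioo 0 1))
    (hv_cont : ContinuousOn v (Ioo 0 1))
    (hG : ∀ A B, ∀ t ∈ Ioo (0 : ℝ) 1,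
      G A t B = t • (u t ∘L A ∘L adjoint (u t)) + (1 - t) • (v t ∘L B ∘L adjoint (v t)))
    (A B : H →L[ℂ] H) {t : ℝ} (ht : t ∈ Ioo 0 1) :
    ContinuousAt (fun p : (H →L[ℂ] H) × ℝ × (H →L[ℂ] H) => G p.1 p.2.1 p.2.2) (A, t, B) := by
  have hP : {p : (H →L[ℂ] H) × ℝ × (H →L[ℂ] H) | p.2.1 ∈ Ioo 0 1} ∈ 𝓝 (A, t, B) :=
    (isOpen_Ioo.preimage (by fun_prop)).mem_nhds ht
  have hu : ContinuousAt (fun p : (H →L[ℂ] H) × ℝ × (H →L[ℂ] H) => u p.2.1) (A, t, B) :=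
    (hu_cont.continuousAt (Ioo_mem_nhds ht.1 ht.2)).comp (by fun_prop)
  have hv : ContinuousAt (fun p : (H →L[ℂ] H) × ℝ × (H →L[ℂ] H) => v p.2.1) (A, t, B) :=
    (hv_cont.continuousAt (Ioo_mem_nhds ht.1 ht.2)).comp (by fun_prop)
  have hconj {w X : (H →L[ℂ] H) × ℝ × (H →L[ℂ] H) → H →L[ℂ] H} (hw : ContinuousAt w (A, t, B))
      (hX : ContinuousAt X (A, t, B)) :
      ContinuousAt (fun p => w p ∘L X p ∘L adjoint (w p)) (A, t, B) :=
    hw.clm_comp (hX.clm_comp (adjoint.continuous.continuousAt.comp hw))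
  have hs : ContinuousAt (fun p : (H →L[ℂ] H) × ℝ × (H →L[ℂ] H) => p.2.1) (A, t, B) := by
    fun_prop
  have hF : ContinuousAt (fun p : (H →L[ℂ] H) × ℝ × (H →L[ℂ] H) =>
      p.2.1 • (u p.2.1 ∘L p.1 ∘L adjoint (u p.2.1)) +
        (1 - p.2.1) • (v p.2.1 ∘L p.2.2 ∘L adjoint (v p.2.1))) (A, t, B) :=
    (hs.smul (hconj hu continuousAt_fst)).add ((continuousAt_const.sub hs).smul
      (hconj hv (continuous_snd.comp continuous_snd).continuousAt))
  exact hF.congr (eventually_of_mem hP fun p hp => (hG _ _ _ hp).symm)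

end Homotopy

theorem stmt16_general {H : Type*} [NormedAddCommGroup H] [InnerProductSpace ℂ H]
    [CompleteSpace H]
    (u : ℝ → H →L[ℂ] H)
    (hu_iso : ∀ t ∈ Set.Ioc (0 : ℝ) 1, adjoint (u t) ∘L u t = 1)
    (hu_cont : ContinuousOn u (Set.Ioo 0 1))
    (hu_strong : ∀ h : H, Tendsto (fun t => u t h) (nhdsWithin 1 (Set.Ioo (0 : ℝ) 1)) (nhds h))
    (v : ℝ → H →L[ℂ] H)
    (hv_iso : ∀ t ∈ Set.Ico (0 : ℝ) 1, adjoint (v t) ∘L v t = 1)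
    (hv_cont : ContinuousOn v (Set.Ioo 0 1))
    (hv_strong : ∀ h : H, Tendsto (fun t => v t h) (nhdsWithin 0 (Set.Ioo (0 : ℝ) 1)) (nhds h))
    (G : (H →L[ℂ] H) → ℝ → (H →L[ℂ] H) → (H →L[ℂ] H))
    (hG : ∀ (A B : H →L[ℂ] H), ∀ t ∈ Set.Ioo (0 : ℝ) 1,
      G A t B = t • (u t ∘L A ∘L adjoint (u t)) + (1 - t) • (v t ∘L B ∘L adjoint (v t)))
    (hG0 : ∀ A B : H →L[ℂ] H, G A 0 B = B)
    (hG1 : ∀ A B : H →L[ℂ] H, G A 1 B = A) :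
    (∀ A B : H →L[ℂ] H, IsCompactOperator (⇑A) → IsCompactOperator (⇑B) →
      ∀ t ∈ Set.Icc (0 : ℝ) 1, IsCompactOperator (⇑(G A t B))) ∧
    ContinuousOn (fun p : (H →L[ℂ] H) × ℝ × (H →L[ℂ] H) => G p.1 p.2.1 p.2.2)
      ({A : H →L[ℂ] H | IsCompactOperator (⇑A)} ×ˢ
        (Set.Icc (0 : ℝ) 1 ×ˢ {B : H →L[ℂ] H | IsCompactOperator (⇑B)})) := by
  have hu : ∀ t ∈ Ioo (0 : ℝ) 1, ‖u t‖ ≤ 1 := fun t ht =>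
    norm_le_one_of_adjoint_comp_self_eq_one (hu_iso t (Ioo_subset_Ioc_self ht))
  have hv : ∀ t ∈ Ioo (0 : ℝ) 1, ‖v t‖ ≤ 1 := fun t ht =>
    norm_le_one_of_adjoint_comp_self_eq_one (hv_iso t (Ioo_subset_Ico_self ht))
  refine ⟨fun A B hA hB t ht => ?_, ?_⟩
  · rcases ht.1.eq_or_lt with rfl | ht0
    · rwa [hG0]
    rcases ht.2.eq_or_lt with rfl | ht1
    · rwa [hG1]
    rw [hG A B t ⟨ht0, ht1⟩]
    exact (((hA.comp_clm _).clm_comp _).smul t).add (((hB.comp_clm _).clm_comp _).smul (1 - t))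
  rintro ⟨A, t, B⟩ ⟨hA, ht, hB⟩
  have hS : {A : H →L[ℂ] H | IsCompactOperator (⇑A)} ×ˢ
      (Icc (0 : ℝ) 1 ×ˢ {B : H →L[ℂ] H | IsCompactOperator (⇑B)}) ⊆ {p | p.2.1 ∈ Icc 0 1} :=
    fun p hp => hp.2.1
  rcases ht.1.eq_or_lt with rfl | ht0
  · exact (continuousWithinAt_homotopy_zero hu hv hv_strong hG hG0 A hB).mono hS
  rcases ht.2.eq_or_lt with rfl | ht1
  · exact (continuousWithinAt_homotopy_one hu hu_strong hv hG hG1 hA B).mono hS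
  exact (continuousAt_homotopy_of_mem_Ioo hu_cont hv_cont hG A B ⟨ht0, ht1⟩).continuousWithinAt

/-- The canonical homotopy `(A, t, B) ↦ t • (u t A u t*) + (1 - t) • (v t B v t*)`
(extended by `B` at `t = 0` and by `A` at `t = 1`) is a jointly norm-continuous map
`K(H) × [0,1] × K(H) → K(H)`. -/
theorem stmt16 {H : Type*} [NormedAddCommGroup H] [InnerProductSpace ℂ H]
    [CompleteSpace H] [TopologicalSpace.SeparableSpace H]
    (_hinf : ¬FiniteDimensional ℂ H)
    (u : ℝ → H →L[ℂ] H)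
    (hu_iso : ∀ t ∈ Set.Ioc (0 : ℝ) 1, adjoint (u t) ∘L u t = 1)
    (hu_one : u 1 = 1)
    (hu_cont : ContinuousOn u (Set.Ioo 0 1))
    (hu_strong : ∀ h : H, Tendsto (fun t => u t h) (nhdsWithin 1 (Set.Ioo (0 : ℝ) 1)) (nhds h))
    (v : ℝ → H →L[ℂ] H)
    (hv_iso : ∀ t ∈ Set.Ico (0 : ℝ) 1, adjoint (v t) ∘L v t = 1)
    (hv_zero : v 0 = 1)
    (hv_cont : ContinuousOn v (Set.Ioo 0 1))
    (hv_strong : ∀ h : H, Tendsto (fun t => v t h) (nhdsWithin 0 (Set.Ioo (0 : ℝ) 1)) (nhds h))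
    (G : (H →L[ℂ] H) → ℝ → (H →L[ℂ] H) → (H →L[ℂ] H))
    (hG : ∀ (A B : H →L[ℂ] H), ∀ t ∈ Set.Ioo (0 : ℝ) 1,
      G A t B = t • (u t ∘L A ∘L adjoint (u t)) + (1 - t) • (v t ∘L B ∘L adjoint (v t)))
    (hG0 : ∀ A B : H →L[ℂ] H, G A 0 B = B)
    (hG1 : ∀ A B : H →L[ℂ] H, G A 1 B = A) :
    (∀ A B : H →L[ℂ] H, IsCompactOperator (⇑A) → IsCompactOperator (⇑B) →
      ∀ t ∈ Set.Icc (0 : ℝ) 1, IsCompactOperator (⇑(G A t B))) ∧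
    ContinuousOn (fun p : (H →L[ℂ] H) × ℝ × (H →L[ℂ] H) => G p.1 p.2.1 p.2.2)
      ({A : H →L[ℂ] H | IsCompactOperator (⇑A)} ×ˢ
        (Set.Icc (0 : ℝ) 1 ×ˢ {B : H →L[ℂ] H | IsCompactOperator (⇑B)})) :=
  stmt16_general u hu_iso hu_cont hu_strong v hv_iso hv_cont hv_strong G hG hG0 hG1
end
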